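/- With sorted inputs x_1 ≤ ... ≤ x_N, an index 1 ≤ i_L ≤ N-K+1 and i_R = i_L + K - 1, and an evaluation point z satisfying (x_{i_L - 1} + x_{i_R})/2 < z (vacuously if i_L = 1) and z ≤ (x_{i_L} + x_{i_R + 1})/2 (vacuously if i_R = N), any bandwidth h with max{z - x_{i_L}, x_{i_R} - z} ≤ h < min{z - x_{i_L - 1}, x_{i_R + 1} - z} (dropping the constraints involving nonexistent indices) yields an interval [z-h, z+h] containing exactly the K points x_{i_L}, ..., x_{i_R}, i.e., #{i : x_i ∈ [z-h, z+h]} = K, assuming all x_i are distinct. -/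
import Mathlib

/-- A K-nearest-neighbor bandwidth yields an interval containing exactly K points. -/
theorem knn_bandwidth_card (N K iL iR : ℕ) (x : ℕ → ℝ) (z h : ℝ)
    (hmono : ∀ i j, 1 ≤ i → i < j → j ≤ N → x i < x j)
    (hK1 : 1 ≤ K) (hKN : K ≤ N)
    (hiL1 : 1 ≤ iL) (hiLmax : iL ≤ N - K + 1)
    (hiR : iR = iL + K - 1)
    (hz1 : 1 < iL → (x (iL - 1) + x iR) / 2 < z)
    (hz2 : iR < N → z ≤ (x iL + x (iR + 1)) / 2)
    (hpos : 0 < h)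
    (hlo : max (z - x iL) (x iR - z) ≤ h)
    (hhi1 : 1 < iL → h < z - x (iL - 1))
    (hhi2 : iR < N → h < x (iR + 1) - z) :
    ((Finset.Icc 1 N).filter (fun i => z - h ≤ x i ∧ x i ≤ z + h)).card = K := by
  have hIRN : iR ≤ N := by omega
  have hmono' : ∀ i j, 1 ≤ i → i ≤ j → j ≤ N → x i ≤ x j := by
    intro i j h1 h2 h3
    rcases eq_or_lt_of_le h2 with rfl | hlt
    · exact le_refl _
    · exact (hmono i j h1 hlt h3).le
  have hset : (Finset.Icc 1 N).filter (fun i => z - h ≤ x i ∧ x i ≤ z + h)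
      = Finset.Icc iL iR := by
    ext i
    simp only [Finset.mem_filter, Finset.mem_Icc]
    constructor
    · rintro ⟨⟨h1, h2⟩, h3, h4⟩
      constructor
      · by_contra hc
        push_neg at hc
        have hiL1' : 1 < iL := by omega
        have hle : x i ≤ x (iL - 1) := hmono' i (iL - 1) h1 (by omega) (by omega)
        have := hhi1 hiL1'
        linarith
      · by_contra hc
        push_neg at hc
        have hiRN : iR < N := by omega
        have hle : x (iR + 1) ≤ x i := hmono' (iR + 1) i (by omega) (by omega) h2
        have := hhi2 hiRN
        linarith
    · rintro ⟨h1, h2⟩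
      have hxiL : x iL ≤ x i := hmono' iL i hiL1 h1 (by omega)
      have hxiR : x i ≤ x iR := hmono' i iR (by omega) h2 hIRN
      have hloL : z - x iL ≤ h := le_trans (le_max_left _ _) hlo
      have hloR : x iR - z ≤ h := le_trans (le_max_right _ _) hlo
      exact ⟨⟨by omega, by omega⟩, by linarith, by linarith⟩
  rw [hset, Nat.card_Icc]
  omega
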